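/- arXiv:2509.19162 — 3 statements merged into one kernel-verified Lean document; each statement's English description precedes it below -/
import Mathlib

section
/- Let n ≥ 3 and let R be the set of reversals r_{i,j} ∈ Sₙ for 1 ≤ i < j ≤ n. The reversal graph Rₙ = Cay(Sₙ, R) contains no triangles (3-cliques) and contains no subgraph isomorphic to the complete bipartite graph K_{2,4}. -/
/-- The Cayley graph of a group `G` with respect to a set `S` of generators.
When `S` is closed under inverses and does not contain the identity, `g` and `h`
are adjacent if and only if `g⁻¹ * h ∈ S`. -/
def cayleyGraph {G : Type*} [Group G] (S : Set G) : SimpleGraph G where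
  Adj g h := g ≠ h ∧ (g⁻¹ * h ∈ S ∨ h⁻¹ * g ∈ S)
  symm := by
    constructor
    rintro g h ⟨hne, hmem⟩
    exact ⟨hne.symm, hmem.symm⟩
  loopless := by
    constructor
    rintro g ⟨hne, -⟩
    exact hne rfl


/-- `σ` is a reversal: for some positions `i < j`, it maps each `k` with `i ≤ k ≤ j` to
`i + j − k` and fixes all other positions. -/
def IsReversal {n : ℕ} (σ : Equiv.Perm (Fin n)) : Prop :=
  ∃ i j : Fin n, i < j ∧
    (∀ k : Fin n, i ≤ k → k ≤ j → ((σ k : ℕ) = (i : ℕ) + (j : ℕ) - (k : ℕ))) ∧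
    (∀ k : Fin n, ¬(i ≤ k ∧ k ≤ j) → σ k = k)

/-- The set of all reversals `r_{i,j}`, `i < j`, in the symmetric group on `n` letters
(here realized as permutations of `Fin n`). -/
def reversals (n : ℕ) : Set (Equiv.Perm (Fin n)) :=
  {σ | IsReversal σ}

/-!
If reversals `x` of `[a, b]` and `y` of `[e, f]` are distinct, the least and greatest points
moved by `x * y` are `min a e` and `max b f`. So if `x * y` were a reversal, it would reverse
`[min a e, max b f]`, which comparing the values at a few points rules out: there are no
triangles. Similarly, if the moved points of `h ≠ 1` span `[m, M]` and both `y` and `h * y` are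
reversals, then `y` reverses `[m, M]`, or `h * y` reverses `[m, h m]` or `[h M, M]`. A reversal
is determined by its interval, so there are at most three such `y`: two distinct vertices have at
most three common neighbours, and `K_{2,4}` does not embed.
-/

/-- `σ` is the reversal `r_{i,j}`. -/
def IsReversalOn {n : ℕ} (σ : Equiv.Perm (Fin n)) (i j : Fin n) : Prop :=
  i < j ∧ (∀ k : Fin n, i ≤ k → k ≤ j → ((σ k : ℕ) = (i : ℕ) + (j : ℕ) - (k : ℕ))) ∧
    (∀ k : Fin n, ¬(i ≤ k ∧ k ≤ j) → σ k = k)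

theorem isReversal_iff {n : ℕ} {σ : Equiv.Perm (Fin n)} :
    IsReversal σ ↔ ∃ i j, IsReversalOn σ i j :=
  Iff.rfl

namespace IsReversalOn

variable {n : ℕ} {σ τ : Equiv.Perm (Fin n)} {i j k : Fin n}

theorem val_apply (h : IsReversalOn σ i j) (k : Fin n) :
    (σ k : ℕ) = if (i : ℕ) ≤ k ∧ (k : ℕ) ≤ j then (i : ℕ) + j - k else k := by
  split_ifs with hk
  · exact h.2.1 k hk.1 hk.2
  · rw [h.2.2 k hk]

theorem apply_left (h : IsReversalOn σ i j) : σ i = j := by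
  have := h.val_apply i
  have := h.1
  ext; split_ifs at * <;> omega

theorem apply_right (h : IsReversalOn σ i j) : σ j = i := by
  have := h.val_apply j
  have := h.1
  ext; split_ifs at * <;> omega

theorem apply_of_lt (h : IsReversalOn σ i j) (hk : k < i) : σ k = k :=
  h.2.2 k fun hk' => hk.not_ge hk'.1

theorem apply_of_gt (h : IsReversalOn σ i j) (hk : j < k) : σ k = k :=
  h.2.2 k fun hk' => hk.not_ge hk'.2

theorem mul_self (h : IsReversalOn σ i j) : σ * σ = 1 := by
  ext k
  have h₁ := h.val_apply k
  have h₂ := h.val_apply (σ k)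
  simp only [Equiv.Perm.mul_apply, Equiv.Perm.one_apply]
  split_ifs at h₁ h₂ <;> omega

theorem inv_eq (h : IsReversalOn σ i j) : σ⁻¹ = σ :=
  inv_eq_of_mul_eq_one_right h.mul_self

theorem unique (hσ : IsReversalOn σ i j) (hτ : IsReversalOn τ i j) : σ = τ := by
  ext k
  rw [hσ.val_apply, hτ.val_apply]

theorem isLeast (h : IsReversalOn σ i j) : IsLeast {k | σ k ≠ k} i :=
  ⟨by simp [h.apply_left, h.1.ne'], fun _ hk => not_lt.1 fun hlt => hk (h.apply_of_lt hlt)⟩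

theorem isGreatest (h : IsReversalOn σ i j) : IsGreatest {k | σ k ≠ k} j :=
  ⟨by simp [h.apply_right, h.1.ne], fun _ hk => not_lt.1 fun hlt => hk (h.apply_of_gt hlt)⟩

end IsReversalOn

section Products

variable {n : ℕ} {s t : Equiv.Perm (Fin n)} {a b e f : Fin n}

theorem IsReversalOn.val_endpoints_ne (hs : IsReversalOn s a b) (ht : IsReversalOn t e f)
    (hne : s ≠ t) : ¬((a : ℕ) = e ∧ (b : ℕ) = f) := fun ⟨hae, hbf⟩ =>
  hne (hs.unique (Fin.ext hae ▸ Fin.ext hbf ▸ ht))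

theorem IsReversalOn.isLeast_mul (hs : IsReversalOn s a b) (ht : IsReversalOn t e f)
    (hne : s ≠ t) : IsLeast {k | (s * t) k ≠ k} (min a e) := by
  have hint := hs.val_endpoints_ne ht hne
  refine ⟨fun hfix => ?_, fun k hk => not_lt.1 fun hlt => hk ?_⟩
  · have hval := congrArg Fin.val hfix
    rw [Equiv.Perm.mul_apply, hs.val_apply, ht.val_apply, Fin.coe_min] at hval
    have := hs.1; have := ht.1
    split_ifs at hval <;> omega
  · rw [Equiv.Perm.mul_apply, ht.apply_of_lt (hlt.trans_le (min_le_right _ _)),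
      hs.apply_of_lt (hlt.trans_le (min_le_left _ _))]

theorem IsReversalOn.isGreatest_mul (hs : IsReversalOn s a b) (ht : IsReversalOn t e f)
    (hne : s ≠ t) : IsGreatest {k | (s * t) k ≠ k} (max b f) := by
  have hint := hs.val_endpoints_ne ht hne
  refine ⟨fun hfix => ?_, fun k hk => not_lt.1 fun hlt => hk ?_⟩
  · have hval := congrArg Fin.val hfix
    rw [Equiv.Perm.mul_apply, hs.val_apply, ht.val_apply, Fin.coe_max] at hval
    have := hs.1; have := ht.1
    split_ifs at hval <;> omega
  · rw [Equiv.Perm.mul_apply, ht.apply_of_gt ((le_max_right _ _).trans_lt hlt),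
      hs.apply_of_gt ((le_max_left _ _).trans_lt hlt)]

theorem not_isReversal_mul (hs : IsReversal s) (ht : IsReversal t) : ¬IsReversal (s * t) := by
  rw [isReversal_iff] at hs ht ⊢
  obtain ⟨a, b, hs⟩ := hs
  obtain ⟨e, f, ht⟩ := ht
  rintro ⟨p, q, hσ⟩
  have hne : s ≠ t := by
    rintro rfl
    exact hσ.isLeast.1 (by rw [hs.mul_self]; rfl)
  have hcomm : s * t = t * s := by
    rw [← hσ.inv_eq, mul_inv_rev, hs.inv_eq, ht.inv_eq]
  wlog hea : e ≤ a generalizing s t a b e f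
  · exact this e f ht a b hs (hcomm ▸ hσ) hne.symm hcomm.symm (le_of_not_ge hea)
  have hp : p = e := by rw [hσ.isLeast.unique (hs.isLeast_mul ht hne), min_eq_right hea]
  have hq : (q : ℕ) = max (b : ℕ) f := by
    rw [hσ.isGreatest.unique (hs.isGreatest_mul ht hne), Fin.coe_max]
  have h₁ : (s f : ℕ) = q := by rw [← ht.apply_left, ← hp, ← Equiv.Perm.mul_apply, hσ.apply_left]
  have h₂ : (s (t q) : ℕ) = e := by rw [← Equiv.Perm.mul_apply, hσ.apply_right, hp]
  have h₃ : ((s * t) (t a) : ℕ) = b := by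
    rw [Equiv.Perm.mul_apply, ← Equiv.Perm.mul_apply t t, ht.mul_self, Equiv.Perm.one_apply,
      hs.apply_left]
  -- these three values are incompatible for every relative position of the two intervals
  rw [hs.val_apply] at h₁
  rw [hs.val_apply, ht.val_apply] at h₂
  rw [hσ.val_apply, ht.val_apply] at h₃
  have := hs.1; have := ht.1; have := hσ.1
  subst hp
  split_ifs at h₁ h₂ h₃ <;> omega

end Products

section CommonFactors

variable {n : ℕ} {h x y : Equiv.Perm (Fin n)} {a b e f m M : Fin n}

theorem IsReversalOn.mul_cases (hx : IsReversalOn x a b) (hy : IsReversalOn y e f)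
    (hm : IsLeast {k | (x * y) k ≠ k} m) (hM : IsGreatest {k | (x * y) k ≠ k} M) :
    IsReversalOn y m M ∨ IsReversalOn x m ((x * y) m) ∨ IsReversalOn x ((x * y) M) M := by
  have hne : x ≠ y := by
    rintro rfl
    exact hm.1 (by rw [hx.mul_self]; rfl)
  obtain rfl : m = min a e := hm.unique (hx.isLeast_mul hy hne)
  obtain rfl : M = max b f := hM.unique (hx.isGreatest_mul hy hne)
  by_cases hfM : f = max b f
  · by_cases hem : e = min a e
    · exact Or.inl (hem ▸ hfM ▸ hy)
    · have ham : a = min a e := ((min_choice a e).resolve_right (Ne.symm hem)).symm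
      have hye : y (min a e) = min a e :=
        hy.apply_of_lt (lt_of_le_of_ne (min_le_right a e) (Ne.symm hem))
      refine Or.inr (Or.inl ?_)
      rw [Equiv.Perm.mul_apply, hye, ← ham, hx.apply_left]
      exact ham ▸ hx
  · have hbM : b = max b f := ((max_choice b f).resolve_right (Ne.symm hfM)).symm
    have hyf : y (max b f) = max b f :=
      hy.apply_of_gt (lt_of_le_of_ne (le_max_right b f) hfM)
    refine Or.inr (Or.inr ?_)
    rw [Equiv.Perm.mul_apply, hyf, ← hbM, hx.apply_right]
    exact hbM ▸ hx

theorem ncard_setOf_isReversal_and_isReversal_mul_le_three (hh : h ≠ 1) :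
    {y | IsReversal y ∧ IsReversal (h * y)}.ncard ≤ 3 := by
  have hsupp : h.support.Nonempty := Finset.nonempty_iff_ne_empty.2 (by simpa using hh)
  set m := h.support.min' hsupp
  set M := h.support.max' hsupp
  have hm : IsLeast {k | h k ≠ k} m := h.coe_support_eq_set_support ▸ h.support.isLeast_min' hsupp
  have hM : IsGreatest {k | h k ≠ k} M :=
    h.coe_support_eq_set_support ▸ h.support.isGreatest_max' hsupp
  have hcases : {y | IsReversal y ∧ IsReversal (h * y)} ⊆ {y | IsReversalOn y m M} ∪
      {y | IsReversalOn (h * y) m (h m)} ∪ {y | IsReversalOn (h * y) (h M) M} := by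
    rintro y ⟨hy, hx⟩
    rw [isReversal_iff] at hy hx
    obtain ⟨e, f, hy⟩ := hy
    obtain ⟨a, b, hx⟩ := hx
    have hxy : h * y * y = h := by rw [mul_assoc, hy.mul_self, mul_one]
    rw [← hxy] at hm hM
    simpa only [hxy, Set.mem_union, Set.mem_ofPred_eq, or_assoc] using hx.mul_cases hy hm hM
  have hA : {y | IsReversalOn y m M}.ncard ≤ 1 :=
    Set.ncard_le_one_iff_subsingleton.2 fun _ hy _ hy' => IsReversalOn.unique hy hy'
  have hB : ∀ i j, {y | IsReversalOn (h * y) i j}.ncard ≤ 1 := fun i j =>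
    Set.ncard_le_one_iff_subsingleton.2 fun _ hy _ hy' => mul_left_cancel (hy.unique hy')
  calc {y | IsReversal y ∧ IsReversal (h * y)}.ncard
      ≤ ({y | IsReversalOn y m M} ∪ {y | IsReversalOn (h * y) m (h m)} ∪
          {y | IsReversalOn (h * y) (h M) M}).ncard := Set.ncard_le_ncard hcases
    _ ≤ {y | IsReversalOn y m M}.ncard + {y | IsReversalOn (h * y) m (h m)}.ncard +
          {y | IsReversalOn (h * y) (h M) M}.ncard :=
      (Set.ncard_union_le _ _).trans (Nat.add_le_add_right (Set.ncard_union_le _ _) _)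
    _ ≤ 1 + 1 + 1 := Nat.add_le_add (Nat.add_le_add hA (hB _ _)) (hB _ _)

end CommonFactors

theorem cayleyGraph_adj_iff {G : Type*} [Group G] {S : Set G} (hS₁ : (1 : G) ∉ S)
    (hS : ∀ s ∈ S, s⁻¹ ∈ S) {g h : G} : (cayleyGraph S).Adj g h ↔ g⁻¹ * h ∈ S := by
  refine ⟨fun ⟨_, hgh⟩ => hgh.elim id fun hhg => by simpa using hS _ hhg, fun hgh => ⟨?_, .inl hgh⟩⟩
  rintro rfl
  exact hS₁ (by simpa using hgh)

section ReversalGraph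

variable {n : ℕ}

theorem reversalGraph_adj_iff {g h : Equiv.Perm (Fin n)} :
    (cayleyGraph (reversals n)).Adj g h ↔ IsReversal (g⁻¹ * h) := by
  refine cayleyGraph_adj_iff ?_ ?_
  · rintro ⟨i, j, h⟩
    exact IsReversalOn.isLeast h |>.1 rfl
  · rintro s ⟨i, j, h⟩
    rw [IsReversalOn.inv_eq h]
    exact ⟨i, j, h⟩

theorem reversalGraph_cliqueFree_three : (cayleyGraph (reversals n)).CliqueFree 3 := by
  intro s hs
  obtain ⟨x, y, z, hxy, hxz, hyz, -⟩ := SimpleGraph.is3Clique_iff.1 hs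
  rw [reversalGraph_adj_iff] at hxy hxz hyz
  exact not_isReversal_mul hxy hyz (by simpa [mul_assoc] using hxz)

theorem reversalGraph_ncard_commonNeighbors_le_three {u v : Equiv.Perm (Fin n)} (huv : u ≠ v) :
    ((cayleyGraph (reversals n)).commonNeighbors u v).ncard ≤ 3 := by
  refine le_trans (Set.ncard_le_ncard_of_injOn (fun w => v⁻¹ * w) ?_ ?_)
    (ncard_setOf_isReversal_and_isReversal_mul_le_three (h := u⁻¹ * v) (by simpa [inv_mul_eq_one]))
  · intro w hw
    rw [SimpleGraph.mem_commonNeighbors, reversalGraph_adj_iff, reversalGraph_adj_iff] at hw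
    exact ⟨hw.2, by simpa [mul_assoc] using hw.1⟩
  · exact fun _ _ _ _ => mul_left_cancel

end ReversalGraph

theorem reversals_triangleFree_and_K24Free_general (n : ℕ) :
    (cayleyGraph (reversals n)).CliqueFree 3 ∧
      ¬∃ f : completeBipartiteGraph (Fin 2) (Fin 4) →g cayleyGraph (reversals n),
        Function.Injective f := by
  refine ⟨reversalGraph_cliqueFree_three, ?_⟩
  rintro ⟨f, hf⟩
  have hcommon : Set.range (f ∘ Sum.inr) ⊆
      (cayleyGraph (reversals n)).commonNeighbors (f (.inl 0)) (f (.inl 1)) := by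
    rintro _ ⟨b, rfl⟩
    exact ⟨f.map_adj (by simp), f.map_adj (by simp)⟩
  have hfour : (Set.range (f ∘ Sum.inr)).ncard = 4 := by
    simpa using Set.ncard_range_of_injective (hf.comp Sum.inr_injective)
  have := (Set.ncard_le_ncard hcommon).trans
    (reversalGraph_ncard_commonNeighbors_le_three (hf.ne (by simp)))
  omega

/-- The reversal graph `Rₙ` (`n ≥ 3`) contains no triangles and no subgraph isomorphic
to the complete bipartite graph `K_{2,4}` (a subgraph isomorphic to `K_{2,4}` is the
same as an injective graph homomorphism from `K_{2,4}`). -/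
theorem reversals_triangleFree_and_K24Free (n : ℕ) (hn : 3 ≤ n) :
    (cayleyGraph (reversals n)).CliqueFree 3 ∧
      ¬∃ f : completeBipartiteGraph (Fin 2) (Fin 4) →g cayleyGraph (reversals n),
        Function.Injective f :=
  reversals_triangleFree_and_K24Free_general n
end

section
/- (Glushkov's bound) Let n ≥ 2, let L ∈ Sₙ be the n-cycle (1 2 … n) (the left cyclic shift) and let X = (1 2) be the transposition of the first two elements. Then every permutation of Sₙ can be written as a product of at most 2n² factors, each factor equal to L or to X (no inverses allowed); that is, the diameter of the directed Cayley graph of Sₙ generated by {L, X} is at most 2n². -/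
/-!
Conjugating `X = swap 0 1` by `Lⁱ` gives the adjacent transposition `swap i (i+1)`, so the
products of consecutive ones telescope: the cycle `cycleIcc a (a + r)` equals
`Lᵃ (X L)ʳ L⁻⁽ᵃ⁺ʳ⁾`, a word of length `n + r ≤ 2n` once `L⁻¹` is written as `Lⁿ⁻¹`.
Insertion sort then writes any permutation as a product of `n` such cycles: if `π` fixes
everything above `k`, then `π k ≤ k` and `(cycleIcc (π k) k)⁻¹ * π` fixes `k` as well.
-/

open Equiv

section Words

variable {M : Type*} [Monoid M] {S : Set M}

def HasWordOfLengthLE (S : Set M) (k : ℕ) (g : M) : Prop :=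
  ∃ l : List M, l.length ≤ k ∧ (∀ x ∈ l, x ∈ S) ∧ l.prod = g

namespace HasWordOfLengthLE

theorem of_mem {x : M} (hx : x ∈ S) : HasWordOfLengthLE S 1 x :=
  ⟨[x], le_rfl, by simpa using hx, List.prod_singleton⟩

theorem mono {k k' : ℕ} {g : M} (h : HasWordOfLengthLE S k g) (hk : k ≤ k') :
    HasWordOfLengthLE S k' g :=
  let ⟨l, hl, hS, hg⟩ := h
  ⟨l, hl.trans hk, hS, hg⟩

theorem mul {a b : ℕ} {g h : M} (hg : HasWordOfLengthLE S a g) (hh : HasWordOfLengthLE S b h) :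
    HasWordOfLengthLE S (a + b) (g * h) := by
  obtain ⟨l₁, hl₁, hS₁, rfl⟩ := hg
  obtain ⟨l₂, hl₂, hS₂, rfl⟩ := hh
  refine ⟨l₁ ++ l₂, by simpa using Nat.add_le_add hl₁ hl₂, ?_, List.prod_append⟩
  simpa only [List.mem_append] using fun x hx => hx.elim (hS₁ x) (hS₂ x)

theorem pow {a : ℕ} {g : M} (hg : HasWordOfLengthLE S a g) (r : ℕ) :
    HasWordOfLengthLE S (a * r) (g ^ r) := by
  induction r with
  | zero => exact ⟨[], le_rfl, by simp, (pow_zero g).symm⟩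
  | succ r ih => simpa only [pow_succ, Nat.mul_succ] using ih.mul hg

end HasWordOfLengthLE

end Words

theorem Equiv.Perm.apply_le_of_forall_gt_apply_eq {α : Type*} [LinearOrder α] {σ : Perm α}
    {k : α} (h : ∀ i, k < i → σ i = i) : σ k ≤ k := by
  by_contra! hk
  exact hk.ne' (σ.injective (h _ hk))

theorem Fin.cycleIcc_eq_swap {n : ℕ} [NeZero n] {i j : Fin n} (h : (j : ℕ) = i + 1) :
    cycleIcc i j = swap i j := by
  ext x
  rcases lt_or_ge x i with hx | hx
  · rw [cycleIcc_of_lt hx, swap_apply_of_ne_of_ne hx.ne (by omega)]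
  rcases lt_or_ge j x with hx' | hx'
  · rw [cycleIcc_of_gt hx', swap_apply_of_ne_of_ne (by omega) hx'.ne']
  rw [cycleIcc_of_le_of_le hx hx']
  obtain rfl | rfl : x = i ∨ x = j := by omega
  · simp [Fin.ext_iff, Fin.val_add, h, Nat.mod_eq_of_lt (show (x : ℕ) + 1 < n by omega)]
  · simp

theorem Fin.cycleIcc_eq_cycleIcc_mul_swap {n : ℕ} [NeZero n] {i j k : Fin n} (hij : i ≤ j)
    (hk : (k : ℕ) = j + 1) : cycleIcc i k = cycleIcc i j * swap j k := by
  rw [← cycleIcc_eq_swap hk]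
  exact DFunLike.coe_injective (cycleIcc.trans hij (by rw [Fin.le_def]; omega)).symm

namespace Glushkov

variable {m : ℕ}

abbrev L (m : ℕ) : Perm (Fin (m + 2)) := finRotate (m + 2)

abbrev X (m : ℕ) : Perm (Fin (m + 2)) := swap 0 1

def generators (m : ℕ) : Set (Perm (Fin (m + 2))) := {L m, X m}

theorem L_pow_apply_mk {k i : ℕ} (h : k + i < m + 2) :
    (L m ^ i) ⟨k, by omega⟩ = ⟨k + i, h⟩ := by
  induction i with
  | zero => rfl
  | succ i ih => rw [pow_succ', Perm.mul_apply, ih (by omega), finRotate_of_lt (by omega)]; rfl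

theorem L_pow_self : L m ^ (m + 2) = 1 := by
  have h := (isCycle_finRotate (n := m)).orderOf
  rw [support_finRotate, Finset.card_univ, Fintype.card_fin] at h
  simpa [h] using pow_orderOf_eq_one (L m)

theorem L_pow_mul_X_mul_L_pow_inv {i : ℕ} (h : i + 1 < m + 2) :
    L m ^ i * X m * (L m ^ i)⁻¹ = swap ⟨i, by omega⟩ ⟨i + 1, h⟩ := by
  have h₀ : (L m ^ i) 0 = ⟨i, by omega⟩ :=
    (L_pow_apply_mk (k := 0) (by omega)).trans (Fin.ext (zero_add i))
  have h₁ : (L m ^ i) 1 = ⟨i + 1, h⟩ :=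
    (L_pow_apply_mk (k := 1) (by omega)).trans (Fin.ext (add_comm 1 i))
  rw [← swap_apply_apply, h₀, h₁]

theorem cycleIcc_eq_L_pow_mul {a r : ℕ} (h : a + r < m + 2) :
    Fin.cycleIcc ⟨a, by omega⟩ ⟨a + r, h⟩ =
      L m ^ a * (X m * L m) ^ r * (L m ^ (a + r))⁻¹ := by
  induction r with
  | zero =>
    simp only [Nat.add_zero, pow_zero, mul_one, mul_inv_cancel]
    exact Fin.cycleIcc_eq
  | succ r ih =>
    rw [show (⟨a + (r + 1), h⟩ : Fin (m + 2)) = ⟨a + r + 1, h⟩ from rfl,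
      Fin.cycleIcc_eq_cycleIcc_mul_swap (j := ⟨a + r, by omega⟩) (by simp [Fin.le_def]) rfl,
      ih, ← L_pow_mul_X_mul_L_pow_inv (i := a + r) h,
      pow_succ (X m * L m), ← add_assoc, pow_succ (L m) (a + r)]
    group

theorem hasWordOfLengthLE_cycleIcc {i j : Fin (m + 2)} (hij : i ≤ j) :
    HasWordOfLengthLE (generators m) (2 * (m + 2)) (Fin.cycleIcc i j) := by
  obtain ⟨a, ha⟩ := i
  obtain ⟨_, hb⟩ := j
  obtain ⟨r, rfl⟩ := Nat.exists_eq_add_of_le (Fin.mk_le_mk.mp hij)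
  have hL : HasWordOfLengthLE (generators m) 1 (L m) := .of_mem (by simp [generators])
  have hX : HasWordOfLengthLE (generators m) 1 (X m) := .of_mem (by simp [generators])
  have hinv : (L m ^ (a + r))⁻¹ = L m ^ (m + 2 - (a + r)) := by
    rw [inv_eq_iff_mul_eq_one, ← pow_add, Nat.add_sub_cancel' hb.le, L_pow_self]
  rw [cycleIcc_eq_L_pow_mul hb, hinv]
  refine (((hL.pow a).mul ((hX.mul hL).pow r)).mul (hL.pow _)).mono ?_
  omega

theorem hasWordOfLengthLE_of_forall_le_apply_eq {k : ℕ} (hk : k ≤ m + 2)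
    {π : Perm (Fin (m + 2))} (hπ : ∀ i : Fin (m + 2), k ≤ (i : ℕ) → π i = i) :
    HasWordOfLengthLE (generators m) (2 * (m + 2) * k) π := by
  induction k generalizing π with
  | zero =>
    obtain rfl : π = 1 := Equiv.ext fun i => hπ i (Nat.zero_le _)
    exact ⟨[], le_rfl, by simp, rfl⟩
  | succ k ih =>
    set x : Fin (m + 2) := ⟨k, hk⟩
    have hx : π x ≤ x := π.apply_le_of_forall_gt_apply_eq fun i => hπ i
    set c := Fin.cycleIcc (π x) x
    have hc : ∀ i : Fin (m + 2), k ≤ (i : ℕ) → (c⁻¹ * π) i = i := by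
      intro i hi
      rw [Perm.mul_apply, Perm.inv_eq_iff_eq]
      rcases hi.eq_or_lt with rfl | hi
      · exact (Fin.cycleIcc_of_last hx).symm
      · rw [hπ i hi, Fin.cycleIcc_of_gt hi]
    rw [← mul_inv_cancel_left c π]
    exact ((hasWordOfLengthLE_cycleIcc hx).mul (ih (by omega) hc)).mono (le_of_eq (by ring))

end Glushkov

/-- Glushkov's bound: for `n ≥ 2`, every permutation of `Sₙ` is a product of at most
`2n²` factors, each equal to the left cyclic shift `L = (1 2 … n)` (realized as
`finRotate n`, the cycle sending each element of `Fin n` to the next) or to the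
transposition `X = (1 2)` of the first two elements — no inverses allowed. In other
words the diameter of the directed Cayley graph of `Sₙ` generated by `{L, X}` is at
most `2n²`. -/
theorem glushkov_directed_diameter_bound (n : ℕ) (hn : 2 ≤ n) (π : Equiv.Perm (Fin n)) :
    ∃ l : List (Equiv.Perm (Fin n)),
      l.length ≤ 2 * n ^ 2 ∧
      (∀ x ∈ l, x = finRotate n ∨ x = Equiv.swap ⟨0, by omega⟩ ⟨1, by omega⟩) ∧
      l.prod = π := by
  obtain ⟨m, rfl⟩ : ∃ m, n = m + 2 := ⟨n - 2, by omega⟩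
  obtain ⟨l, hlen, hmem, hprod⟩ :=
    Glushkov.hasWordOfLengthLE_of_forall_le_apply_eq le_rfl (π := π)
      fun i hi => absurd i.isLt (by omega)
  exact ⟨l, hlen.trans_eq (by ring), hmem, hprod⟩
end

section
/- Let n ≥ 2 and m ≥ 3, and let U(n, ℤ/mℤ) be the group of upper unitriangular n×n matrices over ℤ/mℤ (upper triangular matrices with ones on the diagonal), with generating set S = {I ± E_{i,i+1} : 1 ≤ i ≤ n−1}, where E_{i,i+1} is the matrix unit with a 1 in position (i, i+1) and zeros elsewhere. Then the diameter of the Cayley graph Cay(U(n, ℤ/mℤ), S) is at least (n−1)·⌊m/2⌋. -/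
/-!
The entries just above the diagonal of a product of unitriangular matrices add up, which is
the abelianization `U(n, ℤ/mℤ) → (ℤ/mℤ)^{n-1}`. Weigh a vector of `(ℤ/mℤ)^{n-1}` by the sum
of the distances of its coordinates to `0` in the cycle `ℤ/mℤ`. This weight is subadditive
and every generator maps to a vector of weight at most `1`, so a word in the generators has
length at least the weight of its image. The product of `⌊m/2⌋` copies of each
`I + E_{i,i+1}` maps to the constant vector `⌊m/2⌋`, of weight `(n-1)⌊m/2⌋`.
-/

/-- The standard generators of the unitriangular group `U(n, ℤ/mℤ)`: the matrices
`I ± E_{i,i+1}` for `1 ≤ i ≤ n−1`, where `E_{i,i+1}` is the matrix unit with a `1` in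
position `(i, i+1)` and zeros elsewhere. -/
def unitriangularGenerators (n m : ℕ) : Set (Matrix (Fin n) (Fin n) (ZMod m)) :=
  {A | ∃ i j : Fin n, (i : ℕ) + 1 = (j : ℕ) ∧
    (A = 1 + Matrix.single i j 1 ∨ A = 1 - Matrix.single i j 1)}
namespace Matrix

section Unitriangular

variable {ι R : Type*} [Fintype ι] [LinearOrder ι] [Semiring R]

theorem IsUpperTriangular.mul_apply_self {A B : Matrix ι ι R} (hA : A.IsUpperTriangular)
    (hB : B.IsUpperTriangular) (i : ι) : (A * B) i i = A i i * B i i := by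
  rw [mul_apply, Finset.sum_eq_single i]
  · intro k _ hk
    rcases hk.lt_or_gt with h | h
    · rw [hA h, zero_mul]
    · rw [hB h, mul_zero]
  · simp

theorem IsUpperTriangular.mul_apply_of_covBy {A B : Matrix ι ι R} (hA : A.IsUpperTriangular)
    (hB : B.IsUpperTriangular) {i j : ι} (hij : i ⋖ j) :
    (A * B) i j = A i i * B i j + A i j * B j j := by
  rw [mul_apply, ← Finset.sum_pair (f := fun k => A i k * B k j) hij.ne]
  refine (Finset.sum_subset (Finset.subset_univ _) fun k _ hk => ?_).symm
  obtain ⟨hki, hkj⟩ : k ≠ i ∧ k ≠ j := by simpa using hk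
  rcases hki.lt_or_gt with h | h
  · rw [hA h, zero_mul]
  · rw [hB ((not_lt.1 (hij.2 h)).lt_of_ne' hkj), mul_zero]

variable (ι R) in
def unitriangular : Submonoid (Matrix ι ι R) where
  carrier := {A | A.IsUpperTriangular ∧ ∀ i, A i i = 1}
  mul_mem' hA hB :=
    ⟨hA.1.mul hB.1, fun i => by rw [hA.1.mul_apply_self hB.1, hA.2, hB.2, one_mul]⟩
  one_mem' := ⟨blockTriangular_one, fun _ => one_apply_eq _⟩

theorem one_add_single_mem_unitriangular {i j : ι} (hij : i < j) (r : R) :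
    1 + single i j r ∈ unitriangular ι R :=
  ⟨blockTriangular_one.add (blockTriangular_single hij.le r), fun k => by
    rw [add_apply, one_apply_eq, single_apply_of_ne _ _ _ _ _ fun h => hij.ne (h.1.trans h.2.symm),
      add_zero]⟩

theorem unitriangular_mul_apply_of_covBy {A B : Matrix ι ι R} (hA : A ∈ unitriangular ι R)
    (hB : B ∈ unitriangular ι R) {i j : ι} (hij : i ⋖ j) : (A * B) i j = A i j + B i j := by
  rw [hA.1.mul_apply_of_covBy hB.1 hij, hA.2, hB.2, one_mul, mul_one, add_comm]

theorem unitriangular_list_prod_apply_of_covBy {l : List (Matrix ι ι R)}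
    (hl : ∀ A ∈ l, A ∈ unitriangular ι R) {i j : ι} (hij : i ⋖ j) :
    l.prod i j = (l.map (· i j)).sum := by
  induction l with
  | nil => simp [one_apply_ne hij.ne]
  | cons A l ih =>
    rw [List.forall_mem_cons] at hl
    rw [List.prod_cons, unitriangular_mul_apply_of_covBy hl.1 (Submonoid.list_prod_mem _ hl.2) hij,
      ih hl.2, List.map_cons, List.sum_cons]

end Unitriangular

section Superdiag

variable {k : ℕ} {R : Type*}

def superdiag (A : Matrix (Fin (k + 1)) (Fin (k + 1)) R) (c : Fin k) : R :=
  A c.castSucc c.succ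

theorem superdiag_list_prod [Semiring R] {l : List (Matrix (Fin (k + 1)) (Fin (k + 1)) R)}
    (hl : ∀ A ∈ l, A ∈ unitriangular (Fin (k + 1)) R) :
    superdiag l.prod = (l.map superdiag).sum := by
  ext c
  rw [Pi.list_sum_apply, List.map_map]
  exact unitriangular_list_prod_apply_of_covBy hl (by simp)

theorem superdiag_one_add_single [AddZeroClass R] [One R] (c : Fin k) (r : R) :
    superdiag (1 + single c.castSucc c.succ r) = Pi.single c r := by
  ext d
  simp [superdiag, one_apply_ne d.castSucc_lt_succ.ne, single_apply, Pi.single_apply, eq_comm]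

end Superdiag

end Matrix

namespace ZMod

variable {m : ℕ}

theorem natAbs_valMinAbs_intCast_le (z : ℤ) : (z : ZMod m).valMinAbs.natAbs ≤ z.natAbs := by
  rcases eq_zero_or_neZero m with rfl | _
  · exact le_rfl
  · exact natAbs_min_of_le_div_two m _ _ (by simp) (natAbs_valMinAbs_le _)

end ZMod

section CyclicL1Norm

open ZMod

variable {ι : Type*} [Fintype ι] {m : ℕ}

def cyclicL1Norm (v : ι → ZMod m) : ℕ :=
  ∑ i, (v i).valMinAbs.natAbs

theorem cyclicL1Norm_add_le (v w : ι → ZMod m) :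
    cyclicL1Norm (v + w) ≤ cyclicL1Norm v + cyclicL1Norm w := by
  rw [cyclicL1Norm, cyclicL1Norm, cyclicL1Norm, ← Finset.sum_add_distrib]
  exact Finset.sum_le_sum fun i _ =>
    (natAbs_valMinAbs_add_le _ _).trans (Int.natAbs_add_le _ _)

theorem cyclicL1Norm_list_sum_le (l : List (ι → ZMod m)) :
    cyclicL1Norm l.sum ≤ (l.map cyclicL1Norm).sum :=
  List.le_sum_of_subadditive _ (by simp [cyclicL1Norm, valMinAbs_zero]) cyclicL1Norm_add_le l

theorem cyclicL1Norm_single [DecidableEq ι] (c : ι) (r : ZMod m) :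
    cyclicL1Norm (Pi.single c r) = r.valMinAbs.natAbs := by
  rw [cyclicL1Norm, Fintype.sum_eq_single c fun i hi => by simp [hi, valMinAbs_zero],
    Pi.single_eq_same]

theorem cyclicL1Norm_const_half :
    cyclicL1Norm (fun _ : ι => ((m / 2 : ℕ) : ZMod m)) = Fintype.card ι * (m / 2) := by
  simp only [cyclicL1Norm, valMinAbs_natCast_of_le_half le_rfl, Int.natAbs_natCast,
    Finset.sum_const, Finset.card_univ, smul_eq_mul]

end CyclicL1Norm

open Matrix

variable {k m : ℕ}

theorem exists_eq_one_add_single_of_mem_unitriangularGenerators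
    {A : Matrix (Fin (k + 1)) (Fin (k + 1)) (ZMod m)}
    (hA : A ∈ unitriangularGenerators (k + 1) m) :
    ∃ (c : Fin k) (r : ZMod m), (r = 1 ∨ r = -1) ∧ A = 1 + single c.castSucc c.succ r := by
  obtain ⟨i, j, hij, hA⟩ := hA
  obtain ⟨c, rfl⟩ := Fin.exists_succ_eq.2 (Fin.ne_of_val_ne (by omega : (j : ℕ) ≠ 0))
  obtain rfl : i = c.castSucc := Fin.ext (by rw [Fin.val_succ] at hij; rw [Fin.val_castSucc]; omega)
  rcases hA with rfl | rfl
  · exact ⟨c, 1, .inl rfl, rfl⟩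
  · exact ⟨c, -1, .inr rfl, by rw [sub_eq_add_neg, single_neg]⟩

theorem mem_unitriangular_of_mem_unitriangularGenerators
    {A : Matrix (Fin (k + 1)) (Fin (k + 1)) (ZMod m)}
    (hA : A ∈ unitriangularGenerators (k + 1) m) :
    A ∈ unitriangular (Fin (k + 1)) (ZMod m) := by
  obtain ⟨c, r, -, rfl⟩ := exists_eq_one_add_single_of_mem_unitriangularGenerators hA
  exact one_add_single_mem_unitriangular c.castSucc_lt_succ r

theorem cyclicL1Norm_superdiag_le_one {A : Matrix (Fin (k + 1)) (Fin (k + 1)) (ZMod m)}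
    (hA : A ∈ unitriangularGenerators (k + 1) m) : cyclicL1Norm (superdiag A) ≤ 1 := by
  obtain ⟨c, r, hr, rfl⟩ := exists_eq_one_add_single_of_mem_unitriangularGenerators hA
  rw [superdiag_one_add_single, cyclicL1Norm_single]
  rcases hr with rfl | rfl
  · simpa using ZMod.natAbs_valMinAbs_intCast_le (m := m) 1
  · simpa [ZMod.natAbs_valMinAbs_neg] using ZMod.natAbs_valMinAbs_intCast_le (m := m) 1

theorem cyclicL1Norm_superdiag_list_prod_le_length
    {l : List (Matrix (Fin (k + 1)) (Fin (k + 1)) (ZMod m))}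
    (hl : ∀ A ∈ l, A ∈ unitriangularGenerators (k + 1) m) :
    cyclicL1Norm (superdiag l.prod) ≤ l.length := by
  rw [superdiag_list_prod fun A hA => mem_unitriangular_of_mem_unitriangularGenerators (hl A hA)]
  refine (cyclicL1Norm_list_sum_le _).trans ?_
  rw [List.map_map]
  simpa using List.sum_le_card_nsmul (l.map (cyclicL1Norm ∘ superdiag)) 1
    (by simpa using fun A hA => cyclicL1Norm_superdiag_le_one (hl A hA))

def halfWord (k m : ℕ) : List (Matrix (Fin (k + 1)) (Fin (k + 1)) (ZMod m)) :=
  (List.finRange k).flatMap fun c => List.replicate (m / 2) (1 + single c.castSucc c.succ 1)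

theorem mem_unitriangularGenerators_of_mem_halfWord
    {A : Matrix (Fin (k + 1)) (Fin (k + 1)) (ZMod m)} (hA : A ∈ halfWord k m) :
    A ∈ unitriangularGenerators (k + 1) m := by
  obtain ⟨c, -, hc⟩ := List.mem_flatMap.1 hA
  rw [List.eq_of_mem_replicate hc]
  exact ⟨_, _, rfl, .inl rfl⟩

theorem superdiag_halfWord_prod :
    superdiag (halfWord k m).prod = fun _ => ((m / 2 : ℕ) : ZMod m) := by
  rw [superdiag_list_prod fun A hA => mem_unitriangular_of_mem_unitriangularGenerators
    (mem_unitriangularGenerators_of_mem_halfWord hA)]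
  simp only [halfWord, List.map_flatMap, List.map_replicate, superdiag_one_add_single]
  rw [List.flatMap_def, List.sum_flatten, List.map_map, ← Fin.sum_univ_def]
  ext c
  simp [Finset.sum_apply, List.sum_replicate, Pi.single_apply]

theorem unitriangular_diam_lower_bound_general (n m : ℕ) :
    ∃ A : Matrix (Fin n) (Fin n) (ZMod m),
      (∃ l : List (Matrix (Fin n) (Fin n) (ZMod m)),
        (∀ x ∈ l, x ∈ unitriangularGenerators n m) ∧ l.prod = A) ∧
      ∀ l : List (Matrix (Fin n) (Fin n) (ZMod m)),
        (∀ x ∈ l, x ∈ unitriangularGenerators n m) → l.prod = A →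
          (n - 1) * (m / 2) ≤ l.length := by
  cases n with
  | zero => exact ⟨1, ⟨[], by simp⟩, fun l _ _ => by simp⟩
  | succ k =>
    refine ⟨(halfWord k m).prod,
      ⟨_, fun A hA => mem_unitriangularGenerators_of_mem_halfWord hA, rfl⟩,
      fun l hl hprod => ?_⟩
    calc (k + 1 - 1) * (m / 2)
        = cyclicL1Norm (superdiag (halfWord k m).prod) := by
          rw [superdiag_halfWord_prod, cyclicL1Norm_const_half, Fintype.card_fin,
            Nat.add_sub_cancel]
      _ ≤ l.length := hprod ▸ cyclicL1Norm_superdiag_list_prod_le_length hl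

/-- The diameter of the Cayley graph of the unitriangular group `U(n, ℤ/mℤ)` (`n ≥ 2`,
`m ≥ 3`) with respect to the generators `I ± E_{i,i+1}` is at least `(n−1)·⌊m/2⌋`:
there is an element of the group (i.e. a product of the generators) whose every
factorization into generators uses at least `(n−1)·⌊m/2⌋` factors. -/
theorem unitriangular_diam_lower_bound (n m : ℕ) (hn : 2 ≤ n) (hm : 3 ≤ m) :
    ∃ A : Matrix (Fin n) (Fin n) (ZMod m),
      (∃ l : List (Matrix (Fin n) (Fin n) (ZMod m)),
        (∀ x ∈ l, x ∈ unitriangularGenerators n m) ∧ l.prod = A) ∧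
      ∀ l : List (Matrix (Fin n) (Fin n) (ZMod m)),
        (∀ x ∈ l, x ∈ unitriangularGenerators n m) → l.prod = A →
          (n - 1) * (m / 2) ≤ l.length :=
  unitriangular_diam_lower_bound_general n m
end
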